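/- arXiv:2503.09817 — 4 statements merged into one kernel-verified Lean document; each statement's English description precedes it below -/
import Mathlib

section
/- Fix t ∈ [0,1], γ ∈ [0,1). Let p, q : S×A → P(S) be measurable families of probability measures and let Γ̃ be a jointly measurable family such that Γ̃(·|s,a) is a coupling of p(·|s,a) and q(·|s,a) for each (s,a). Define the measure on S×S given by Θ(·|s,a) := (1−γ)·(the pushforward of P_t(·|s,a) under the diagonal map x ↦ (x,x)) + γ·∫ Γ̃(·|s',π(s')) P(ds'|s,a). Then for every (s,a): (i) Θ(·|s,a) is a coupling of (B_t^π p)(·|s,a) and (B_t^π q)(·|s,a); and (ii) for every k ∈ [1,∞), ∫‖x−y‖^k dΘ(x,y|s,a) = γ·∫(∫‖x−y‖^k dΓ̃(x,y|s',π(s'))) P(ds'|s,a). -/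
open MeasureTheory
open scoped ENNReal NNReal

noncomputable section

/-- The state space `S = ℝ^d`. -/
abbrev St (d : ℕ) := EuclideanSpace ℝ (Fin d)

/-- `(P^π m)(·|s,a) := ∫ m(·|s',π(s')) P(ds'|s,a)`. -/
def Ppi {d : ℕ} {𝒜 : Type*} [MeasurableSpace 𝒜]
    (P : St d × 𝒜 → Measure (St d)) (π : St d → 𝒜)
    (m : St d × 𝒜 → Measure (St d)) : St d × 𝒜 → Measure (St d) :=
  fun sa => (P sa).bind fun s' => m (s', π s')

/-- `P_t(·|s,a) := ∫ p_{t|1}(·|x₁) P(dx₁|s,a)` for a conditional path kernel `p_{t|1}`. -/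
def Pt {d : ℕ} {𝒜 : Type*} [MeasurableSpace 𝒜]
    (P : St d × 𝒜 → Measure (St d)) (κ : St d → Measure (St d)) :
    St d × 𝒜 → Measure (St d) :=
  fun sa => (P sa).bind κ

/-- The probability-path Bellman operator
`(B_t^π m)(·|s,a) := (1−γ) P_t(·|s,a) + γ (P^π m)(·|s,a)`. -/
def Bpath {d : ℕ} {𝒜 : Type*} [MeasurableSpace 𝒜] (γ : ℝ)
    (P : St d × 𝒜 → Measure (St d)) (π : St d → 𝒜) (κ : St d → Measure (St d))
    (m : St d × 𝒜 → Measure (St d)) : St d × 𝒜 → Measure (St d) :=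
  fun sa => ENNReal.ofReal (1 - γ) • Pt P κ sa + ENNReal.ofReal γ • Ppi P π m sa

/-- `Γ` is a coupling of `μ` and `ν`: a measure on the product whose marginals are `μ`, `ν`. -/
def IsCoupling {d : ℕ} (Γ : Measure (St d × St d)) (μ ν : Measure (St d)) : Prop :=
  Γ.map Prod.fst = μ ∧ Γ.map Prod.snd = ν

/-- The `k`-Wasserstein distance for the Euclidean distance on `ℝ^d`. -/
def Wk {d : ℕ} (k : ℝ) (μ ν : Measure (St d)) : ℝ≥0∞ :=
  ⨅ (Γ : Measure (St d × St d)) (_ : IsProbabilityMeasure Γ) (_ : IsCoupling Γ μ ν),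
    (∫⁻ p, edist p.1 p.2 ^ k ∂Γ) ^ (1 / k)

/-! Marginals and transport costs are affine in the coupling and commute with averaging over a
kernel. The diagonal lift of `P_t` couples `P_t` with itself at zero cost, and averaging the given
couplings over `s' ∼ P(·|s,a)` couples `P^π p` with `P^π q`; mixing the two with weights `1 - γ`
and `γ` therefore couples the Bellman updates, and only the second part contributes to the cost. -/

namespace MeasureTheory.Measure

variable {α β δ : Type*} [MeasurableSpace α] [MeasurableSpace β] [MeasurableSpace δ]

theorem map_bind (m : Measure α) {f : α → Measure β} (hf : Measurable f) {g : β → δ}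
    (hg : Measurable g) : (m.bind f).map g = m.bind fun a => (f a).map g := by
  ext s hs
  rw [map_apply hg hs, bind_apply (hg hs) hf.aemeasurable,
    bind_apply hs (show Measurable fun a => (f a).map g from
      (measurable_map g hg).comp hf).aemeasurable]
  simp_rw [map_apply hg hs]

theorem isProbabilityMeasure_smul_add_smul (μ ν : Measure α) [IsProbabilityMeasure μ]
    [IsProbabilityMeasure ν] {a b : ℝ≥0∞} (hab : a + b = 1) :
    IsProbabilityMeasure (a • μ + b • ν) :=
  ⟨by simp [hab]⟩

end MeasureTheory.Measure

theorem lintegral_edist_rpow_map_diag {α : Type*} [PseudoEMetricSpace α] [MeasurableSpace α]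
    (μ : Measure α) {k : ℝ} (hk : 0 < k) :
    ∫⁻ pr, edist pr.1 pr.2 ^ k ∂μ.map (fun x => (x, x)) = 0 :=
  le_antisymm
    ((lintegral_map_le _ _).trans_eq (by simp [ENNReal.zero_rpow_of_pos hk])) bot_le

namespace IsCoupling

variable {d : ℕ}

theorem diag (μ : Measure (St d)) : IsCoupling (μ.map fun x => (x, x)) μ μ := by
  have hdiag : Measurable fun x : St d => (x, x) := measurable_id.prodMk measurable_id
  exact ⟨by rw [Measure.map_map measurable_fst hdiag]; exact Measure.map_id,
    by rw [Measure.map_map measurable_snd hdiag]; exact Measure.map_id⟩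

theorem add {Γ₁ Γ₂ : Measure (St d × St d)} {μ₁ μ₂ ν₁ ν₂ : Measure (St d)}
    (h₁ : IsCoupling Γ₁ μ₁ ν₁) (h₂ : IsCoupling Γ₂ μ₂ ν₂) :
    IsCoupling (Γ₁ + Γ₂) (μ₁ + μ₂) (ν₁ + ν₂) :=
  ⟨by rw [Measure.map_add _ _ measurable_fst, h₁.1, h₂.1],
    by rw [Measure.map_add _ _ measurable_snd, h₁.2, h₂.2]⟩

theorem smul {Γ : Measure (St d × St d)} {μ ν : Measure (St d)} (h : IsCoupling Γ μ ν)
    (c : ℝ≥0∞) : IsCoupling (c • Γ) (c • μ) (c • ν) :=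
  ⟨by rw [Measure.map_smul, h.1], by rw [Measure.map_smul, h.2]⟩

theorem bind {α : Type*} [MeasurableSpace α] (m : Measure α) {Γ : α → Measure (St d × St d)}
    (hΓ : Measurable Γ) {μ ν : α → Measure (St d)} (h : ∀ a, IsCoupling (Γ a) (μ a) (ν a)) :
    IsCoupling (m.bind Γ) (m.bind μ) (m.bind ν) :=
  ⟨by simp_rw [Measure.map_bind m hΓ measurable_fst, fun a => (h a).1],
    by simp_rw [Measure.map_bind m hΓ measurable_snd, fun a => (h a).2]⟩

end IsCoupling

theorem explicit_coupling_of_bellman_updates_general {d : ℕ} {𝒜 : Type*} [MeasurableSpace 𝒜]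
    (γ : ℝ) (hγ0 : 0 ≤ γ) (hγ1 : γ < 1)
    (P : St d × 𝒜 → Measure (St d))
    (hPprob : ∀ sa, IsProbabilityMeasure (P sa))
    (π : St d → 𝒜) (hπ : Measurable π)
    (κ : St d → Measure (St d)) (hκmeas : Measurable κ)
    (hκprob : ∀ x, IsProbabilityMeasure (κ x))
    (p q : St d × 𝒜 → Measure (St d))
    -- a jointly measurable family of couplings
    (Γ : St d × 𝒜 → Measure (St d × St d)) (hΓmeas : Measurable Γ)
    (hΓprob : ∀ sa, IsProbabilityMeasure (Γ sa))
    (hΓcpl : ∀ sa, IsCoupling (Γ sa) (p sa) (q sa))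
    -- the lifted coupling Θ
    (Θ : St d × 𝒜 → Measure (St d × St d))
    (hΘ : ∀ sa : St d × 𝒜, Θ sa =
      ENNReal.ofReal (1 - γ) • (Pt P κ sa).map (fun x => (x, x)) +
        ENNReal.ofReal γ • (P sa).bind (fun s' => Γ (s', π s'))) :
    ∀ sa : St d × 𝒜,
      IsProbabilityMeasure (Θ sa) ∧
      IsCoupling (Θ sa) (Bpath γ P π κ p sa) (Bpath γ P π κ q sa) ∧
      ∀ k : ℝ, 1 ≤ k →
        (∫⁻ pr, edist pr.1 pr.2 ^ k ∂Θ sa) =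
          ENNReal.ofReal γ *
            ∫⁻ s', (∫⁻ pr, edist pr.1 pr.2 ^ k ∂Γ (s', π s')) ∂P sa := by
  intro sa
  have hΓπ : Measurable fun s' => Γ (s', π s') := hΓmeas.comp (measurable_id.prodMk hπ)
  have hweights : ENNReal.ofReal (1 - γ) + ENNReal.ofReal γ = 1 := by
    rw [← ENNReal.ofReal_add (by linarith) hγ0]; norm_num
  have := hPprob sa
  have : IsProbabilityMeasure (Pt P κ sa) :=
    isProbabilityMeasure_bind hκmeas.aemeasurable (ae_of_all _ hκprob)
  have : IsProbabilityMeasure ((Pt P κ sa).map fun x => (x, x)) :=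
    Measure.isProbabilityMeasure_map (measurable_id.prodMk measurable_id).aemeasurable
  have : IsProbabilityMeasure ((P sa).bind fun s' => Γ (s', π s')) :=
    isProbabilityMeasure_bind hΓπ.aemeasurable (ae_of_all _ fun _ => hΓprob _)
  refine ⟨hΘ sa ▸ Measure.isProbabilityMeasure_smul_add_smul _ _ hweights,
    hΘ sa ▸ ((IsCoupling.diag _).smul _).add ((IsCoupling.bind _ hΓπ fun _ => hΓcpl _).smul _),
    fun k hk => ?_⟩
  have hcost : Measurable fun pr : St d × St d => edist pr.1 pr.2 ^ k :=
    (measurable_fst.edist measurable_snd).pow_const k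
  rw [hΘ sa, lintegral_add_measure, lintegral_smul_measure, lintegral_smul_measure,
    lintegral_edist_rpow_map_diag _ (by linarith),
    Measure.lintegral_bind hΓπ.aemeasurable hcost.aemeasurable, smul_zero, zero_add, smul_eq_mul]

/-- The explicit coupling `Θ` built from the diagonal lift of `P_t` and the
bootstrapped couplings is a coupling of the Bellman updates, and its `k`-transport cost is `γ`
times the averaged transport cost of the given couplings. -/
theorem explicit_coupling_of_bellman_updates {d : ℕ} {𝒜 : Type*} [MeasurableSpace 𝒜]
    (t : ℝ) (ht : t ∈ Set.Icc (0 : ℝ) 1)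
    (γ : ℝ) (hγ0 : 0 ≤ γ) (hγ1 : γ < 1)
    (P : St d × 𝒜 → Measure (St d)) (hPmeas : Measurable P)
    (hPprob : ∀ sa, IsProbabilityMeasure (P sa))
    (π : St d → 𝒜) (hπ : Measurable π)
    (κ : St d → Measure (St d)) (hκmeas : Measurable κ)
    (hκprob : ∀ x, IsProbabilityMeasure (κ x))
    (p q : St d × 𝒜 → Measure (St d))
    (hpmeas : Measurable p) (hqmeas : Measurable q)
    (hpprob : ∀ sa, IsProbabilityMeasure (p sa)) (hqprob : ∀ sa, IsProbabilityMeasure (q sa))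
    -- a jointly measurable family of couplings
    (Γ : St d × 𝒜 → Measure (St d × St d)) (hΓmeas : Measurable Γ)
    (hΓprob : ∀ sa, IsProbabilityMeasure (Γ sa))
    (hΓcpl : ∀ sa, IsCoupling (Γ sa) (p sa) (q sa))
    -- the lifted coupling Θ
    (Θ : St d × 𝒜 → Measure (St d × St d))
    (hΘ : ∀ sa : St d × 𝒜, Θ sa =
      ENNReal.ofReal (1 - γ) • (Pt P κ sa).map (fun x => (x, x)) +
        ENNReal.ofReal γ • (P sa).bind (fun s' => Γ (s', π s'))) :
    ∀ sa : St d × 𝒜,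
      IsProbabilityMeasure (Θ sa) ∧
      IsCoupling (Θ sa) (Bpath γ P π κ p sa) (Bpath γ P π κ q sa) ∧
      ∀ k : ℝ, 1 ≤ k →
        (∫⁻ pr, edist pr.1 pr.2 ^ k ∂Θ sa) =
          ENNReal.ofReal γ *
            ∫⁻ s', (∫⁻ pr, edist pr.1 pr.2 ^ k ∂Γ (s', π s')) ∂P sa :=
  explicit_coupling_of_bellman_updates_general γ hγ0 hγ1 P hPprob π hπ κ hκmeas hκprob p q Γ hΓmeas
    hΓprob hΓcpl Θ hΘ
end
end

section
/- Fix γ ∈ [0,1) and suppose m^π : S×A → P(S) is a measurable family of probability measures satisfying the Bellman fixed-point equation of the normalized successor measure, m^π(·|s,a) = (1−γ)P(·|s,a) + γ∫ m^π(·|s',π(s')) P(ds'|s,a), for all (s,a). For t ∈ [0,1] define the Monte-Carlo probability path m_t^{MC}(·|s,a) := ∫ p_{t|1}(·|x₁) m^π(dx₁|s,a). Then for every t ∈ [0,1], m_t^{MC} is a fixed point of the probability-path Bellman operator: (B_t^π m_t^{MC})(·|s,a) = m_t^{MC}(·|s,a) for all (s,a). -/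
open MeasureTheory
open scoped ENNReal NNReal

noncomputable section

/-!
Pushing measures through the path kernel `κ = p_{t|1}`, `μ ↦ μ.bind κ`, is additive, commutes
with scalars and is associative with `bind`, so it intertwines the successor-measure Bellman
operator `B^π m = (1-γ) P + γ P^π m` with the probability-path one: `B_t^π (m ⬝ κ) = (B^π m) ⬝ κ`.
Applying `⬝ κ` to the fixed-point equation `m^π = B^π m^π` gives `B_t^π m_t^{MC} = m_t^{MC}`.
-/

namespace MeasureTheory.Measure

variable {α β : Type*} [MeasurableSpace α] [MeasurableSpace β]

theorem bind_add (μ ν : Measure α) {κ : α → Measure β} (hκ : Measurable κ) :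
    (μ + ν).bind κ = μ.bind κ + ν.bind κ := by
  ext s hs
  simp only [bind_apply hs hκ.aemeasurable, add_apply, lintegral_add_measure]

end MeasureTheory.Measure

section PathBellman

variable {d : ℕ} {𝒜 : Type*} [MeasurableSpace 𝒜]

theorem Ppi_bind (P : St d × 𝒜 → Measure (St d)) {π : St d → 𝒜} (hπ : Measurable π)
    {κ : St d → Measure (St d)} (hκ : Measurable κ)
    {m : St d × 𝒜 → Measure (St d)} (hm : Measurable m) (sa : St d × 𝒜) :
    Ppi P π (fun sa' => (m sa').bind κ) sa = (Ppi P π m sa).bind κ :=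
  (Measure.bind_bind (hm.comp (measurable_id.prodMk hπ)).aemeasurable hκ.aemeasurable).symm

theorem Bpath_bind (γ : ℝ) (P : St d × 𝒜 → Measure (St d)) {π : St d → 𝒜} (hπ : Measurable π)
    {κ : St d → Measure (St d)} (hκ : Measurable κ)
    {m : St d × 𝒜 → Measure (St d)} (hm : Measurable m) (sa : St d × 𝒜) :
    Bpath γ P π κ (fun sa' => (m sa').bind κ) sa =
      (ENNReal.ofReal (1 - γ) • P sa + ENNReal.ofReal γ • Ppi P π m sa).bind κ := by
  rw [Measure.bind_add _ _ hκ, Measure.bind_smul, Measure.bind_smul, Bpath,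
    Ppi_bind P hπ hκ hm, Pt]

end PathBellman

theorem monteCarlo_path_is_fixed_point_general {d : ℕ} {𝒜 : Type*} [MeasurableSpace 𝒜]
    (γ : ℝ)
    (P : St d × 𝒜 → Measure (St d))
    (π : St d → 𝒜) (hπ : Measurable π)
    (κ : St d → Measure (St d)) (hκmeas : Measurable κ)
    (mpi : St d × 𝒜 → Measure (St d)) (hmeas : Measurable mpi)
    (hfix : ∀ sa : St d × 𝒜,
      mpi sa = ENNReal.ofReal (1 - γ) • P sa +
        ENNReal.ofReal γ • (P sa).bind (fun s' => mpi (s', π s'))) :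
    ∀ sa : St d × 𝒜,
      Bpath γ P π κ (fun sa' => (mpi sa').bind κ) sa = (mpi sa).bind κ := by
  intro sa
  rw [Bpath_bind γ P hπ hκmeas hmeas, Ppi, ← hfix sa]

/-- If `m^π` satisfies the Bellman fixed-point equation of the normalized
successor measure, then its Monte-Carlo probability path `m_t^{MC}` is a fixed point of the
probability-path Bellman operator `B_t^π`. -/
theorem monteCarlo_path_is_fixed_point {d : ℕ} {𝒜 : Type*} [MeasurableSpace 𝒜]
    (t : ℝ) (ht : t ∈ Set.Icc (0 : ℝ) 1)
    (γ : ℝ) (hγ0 : 0 ≤ γ) (hγ1 : γ < 1)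
    (P : St d × 𝒜 → Measure (St d)) (hPmeas : Measurable P)
    (hPprob : ∀ sa, IsProbabilityMeasure (P sa))
    (π : St d → 𝒜) (hπ : Measurable π)
    (κ : St d → Measure (St d)) (hκmeas : Measurable κ)
    (hκprob : ∀ x, IsProbabilityMeasure (κ x))
    (mpi : St d × 𝒜 → Measure (St d)) (hmeas : Measurable mpi)
    (hprob : ∀ sa, IsProbabilityMeasure (mpi sa))
    (hfix : ∀ sa : St d × 𝒜,
      mpi sa = ENNReal.ofReal (1 - γ) • P sa +
        ENNReal.ofReal γ • (P sa).bind (fun s' => mpi (s', π s'))) :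
    ∀ sa : St d × 𝒜,
      Bpath γ P π κ (fun sa' => (mpi sa').bind κ) sa = (mpi sa).bind κ :=
  monteCarlo_path_is_fixed_point_general γ P π hπ κ hκmeas mpi hmeas hfix
end
end

section
/- Let γ ∈ [0,1] and let v¹_t and v²_t be time-dependent C¹ vector fields on ℝ^d that generate (via the continuity equation) time-dependent C¹ probability density paths p¹_t and p²_t, respectively. Assume (1−γ)p¹_t(x) + γp²_t(x) > 0 for all (t,x). Then the vector field v_t(x) := ((1−γ)p¹_t(x)v¹_t(x) + γp²_t(x)v²_t(x)) / ((1−γ)p¹_t(x) + γp²_t(x)) generates the mixture probability path p_t := (1−γ)p¹_t + γp²_t; i.e., the continuity equation ∂_t p_t(x) + div_x(p_t(x) v_t(x)) = 0 holds for all t ∈ (0,1) and x ∈ ℝ^d. -/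
open MeasureTheory
open scoped ENNReal NNReal

noncomputable section

/-- The divergence of a vector field on `ℝ^d` (trace of the Jacobian). -/
def diverg {d : ℕ} (F : EuclideanSpace ℝ (Fin d) → EuclideanSpace ℝ (Fin d))
    (x : EuclideanSpace ℝ (Fin d)) : ℝ :=
  ∑ i : Fin d, fderiv ℝ F x (EuclideanSpace.single i 1) i

/-! The continuity equation is linear in the pair (density, flux `p • v`); the mixture vector
field is chosen precisely so that its flux `p • v` is the mixture of the fluxes `pᵢ • vᵢ`. -/

section UncurryDifferentiable

variable {𝕜 E F G : Type*} [NontriviallyNormedField 𝕜]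
  [NormedAddCommGroup E] [NormedSpace 𝕜 E] [NormedAddCommGroup F] [NormedSpace 𝕜 F]
  [NormedAddCommGroup G] [NormedSpace 𝕜 G]

theorem Differentiable.uncurry_apply_left {f : E → F → G}
    (hf : Differentiable 𝕜 fun q : E × F => f q.1 q.2) (x : E) : Differentiable 𝕜 (f x) :=
  hf.comp ((differentiable_const x).prodMk differentiable_id)

theorem Differentiable.uncurry_apply_right {f : E → F → G}
    (hf : Differentiable 𝕜 fun q : E × F => f q.1 q.2) (y : F) :
    Differentiable 𝕜 fun x => f x y :=
  hf.comp (differentiable_id.prodMk (differentiable_const y))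

end UncurryDifferentiable

section Divergence

variable {d : ℕ}

theorem diverg_add {F G : EuclideanSpace ℝ (Fin d) → EuclideanSpace ℝ (Fin d)}
    {x : EuclideanSpace ℝ (Fin d)} (hF : DifferentiableAt ℝ F x) (hG : DifferentiableAt ℝ G x) :
    diverg (fun y => F y + G y) x = diverg F x + diverg G x := by
  simp only [diverg, fderiv_fun_add hF hG, add_apply, PiLp.add_apply, Finset.sum_add_distrib]

theorem diverg_const_smul (c : ℝ) (F : EuclideanSpace ℝ (Fin d) → EuclideanSpace ℝ (Fin d))
    (x : EuclideanSpace ℝ (Fin d)) : diverg (fun y => c • F y) x = c * diverg F x := by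
  simp only [diverg, Finset.mul_sum]
  refine Finset.sum_congr rfl fun i _ => ?_
  rw [show (fun y => c • F y) = c • F from rfl, fderiv_const_smul_field]
  rfl

theorem continuityEq_linear_combination {f₁ f₂ : ℝ → ℝ}
    {j₁ j₂ : EuclideanSpace ℝ (Fin d) → EuclideanSpace ℝ (Fin d)} {t : ℝ}
    {x : EuclideanSpace ℝ (Fin d)} (a b : ℝ)
    (hf₁ : DifferentiableAt ℝ f₁ t) (hf₂ : DifferentiableAt ℝ f₂ t)
    (hj₁ : DifferentiableAt ℝ j₁ x) (hj₂ : DifferentiableAt ℝ j₂ x)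
    (h₁ : deriv f₁ t + diverg j₁ x = 0) (h₂ : deriv f₂ t + diverg j₂ x = 0) :
    deriv (fun τ => a * f₁ τ + b * f₂ τ) t + diverg (fun y => a • j₁ y + b • j₂ y) x = 0 := by
  rw [deriv_fun_add (hf₁.const_mul a) (hf₂.const_mul b), deriv_const_mul a hf₁,
    deriv_const_mul b hf₂, diverg_add (hj₁.fun_const_smul a) (hj₂.fun_const_smul b),
    diverg_const_smul, diverg_const_smul]
  linear_combination a * h₁ + b * h₂

end Divergence

theorem mixture_vector_field_generates_mixture_path_general {d : ℕ}
    (γ : ℝ)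
    (p1 p2 : ℝ → EuclideanSpace ℝ (Fin d) → ℝ)
    (v1 v2 : ℝ → EuclideanSpace ℝ (Fin d) → EuclideanSpace ℝ (Fin d))
    (hp1C1 : ContDiff ℝ 1 fun q : ℝ × EuclideanSpace ℝ (Fin d) => p1 q.1 q.2)
    (hp2C1 : ContDiff ℝ 1 fun q : ℝ × EuclideanSpace ℝ (Fin d) => p2 q.1 q.2)
    (hv1C1 : ContDiff ℝ 1 fun q : ℝ × EuclideanSpace ℝ (Fin d) => v1 q.1 q.2)
    (hv2C1 : ContDiff ℝ 1 fun q : ℝ × EuclideanSpace ℝ (Fin d) => v2 q.1 q.2)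
    (hgen1 : ∀ t ∈ Set.Ioo (0 : ℝ) 1, ∀ x,
      deriv (fun τ => p1 τ x) t + diverg (fun y => p1 t y • v1 t y) x = 0)
    (hgen2 : ∀ t ∈ Set.Ioo (0 : ℝ) 1, ∀ x,
      deriv (fun τ => p2 τ x) t + diverg (fun y => p2 t y • v2 t y) x = 0)
    (hpos : ∀ t x, 0 < (1 - γ) * p1 t x + γ * p2 t x)
    (v : ℝ → EuclideanSpace ℝ (Fin d) → EuclideanSpace ℝ (Fin d))
    (hv : ∀ t x, v t x = ((1 - γ) * p1 t x + γ * p2 t x)⁻¹ •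
        (((1 - γ) * p1 t x) • v1 t x + (γ * p2 t x) • v2 t x)) :
    ∀ t ∈ Set.Ioo (0 : ℝ) 1, ∀ x,
      deriv (fun τ => (1 - γ) * p1 τ x + γ * p2 τ x) t +
        diverg (fun y => ((1 - γ) * p1 t y + γ * p2 t y) • v t y) x = 0 := by
  intro t ht x
  have hp1 := hp1C1.differentiable one_ne_zero
  have hp2 := hp2C1.differentiable one_ne_zero
  have hv1 := hv1C1.differentiable one_ne_zero
  have hv2 := hv2C1.differentiable one_ne_zero
  have hflux : (fun y => ((1 - γ) * p1 t y + γ * p2 t y) • v t y)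
      = fun y => (1 - γ) • (p1 t y • v1 t y) + γ • (p2 t y • v2 t y) := by
    funext y
    rw [hv, smul_inv_smul₀ (hpos t y).ne', mul_smul, mul_smul]
  rw [hflux]
  exact continuityEq_linear_combination (1 - γ) γ
    ((hp1.uncurry_apply_right x).differentiableAt) ((hp2.uncurry_apply_right x).differentiableAt)
    (((hp1.uncurry_apply_left t).smul (hv1.uncurry_apply_left t)).differentiableAt)
    (((hp2.uncurry_apply_left t).smul (hv2.uncurry_apply_left t)).differentiableAt)
    (hgen1 t ht x) (hgen2 t ht x)

/-- If `v¹` generates `p¹` and `v²` generates `p²` via the continuity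
equation, then the density-weighted mixture vector field generates the mixture path
`(1−γ)p¹ + γp²`. -/
theorem mixture_vector_field_generates_mixture_path {d : ℕ}
    (γ : ℝ) (hγ0 : 0 ≤ γ) (hγ1 : γ ≤ 1)
    (p1 p2 : ℝ → EuclideanSpace ℝ (Fin d) → ℝ)
    (v1 v2 : ℝ → EuclideanSpace ℝ (Fin d) → EuclideanSpace ℝ (Fin d))
    (hp1C1 : ContDiff ℝ 1 fun q : ℝ × EuclideanSpace ℝ (Fin d) => p1 q.1 q.2)
    (hp2C1 : ContDiff ℝ 1 fun q : ℝ × EuclideanSpace ℝ (Fin d) => p2 q.1 q.2)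
    (hv1C1 : ContDiff ℝ 1 fun q : ℝ × EuclideanSpace ℝ (Fin d) => v1 q.1 q.2)
    (hv2C1 : ContDiff ℝ 1 fun q : ℝ × EuclideanSpace ℝ (Fin d) => v2 q.1 q.2)
    (hp1nn : ∀ t x, 0 ≤ p1 t x) (hp2nn : ∀ t x, 0 ≤ p2 t x)
    (hp1int : ∀ t, (∫ x, p1 t x) = 1) (hp2int : ∀ t, (∫ x, p2 t x) = 1)
    (hgen1 : ∀ t ∈ Set.Ioo (0 : ℝ) 1, ∀ x,
      deriv (fun τ => p1 τ x) t + diverg (fun y => p1 t y • v1 t y) x = 0)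
    (hgen2 : ∀ t ∈ Set.Ioo (0 : ℝ) 1, ∀ x,
      deriv (fun τ => p2 τ x) t + diverg (fun y => p2 t y • v2 t y) x = 0)
    (hpos : ∀ t x, 0 < (1 - γ) * p1 t x + γ * p2 t x)
    (v : ℝ → EuclideanSpace ℝ (Fin d) → EuclideanSpace ℝ (Fin d))
    (hv : ∀ t x, v t x = ((1 - γ) * p1 t x + γ * p2 t x)⁻¹ •
        (((1 - γ) * p1 t x) • v1 t x + (γ * p2 t x) • v2 t x)) :
    ∀ t ∈ Set.Ioo (0 : ℝ) 1, ∀ x,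
      deriv (fun τ => (1 - γ) * p1 τ x + γ * p2 τ x) t +
        diverg (fun y => ((1 - γ) * p1 t y + γ * p2 t y) • v t y) x = 0 :=
  mixture_vector_field_generates_mixture_path_general γ p1 p2 v1 v2 hp1C1 hp2C1 hv1C1 hv2C1 hgen1
    hgen2 hpos v hv
end
end

section
/- Let γ ∈ [0,1], fix t, and let p¹_t, p²_t be probability densities on ℝ^d and v¹_t, v²_t : ℝ^d → ℝ^d measurable vector fields with ∫‖v¹_t‖² p¹_t dx < ∞ and ∫‖v²_t‖² p²_t dx < ∞; assume (1−γ)p¹_t(x) + γp²_t(x) > 0 for all x. Then the vector field v_t(x) := ((1−γ)p¹_t(x)v¹_t(x) + γp²_t(x)v²_t(x)) / ((1−γ)p¹_t(x) + γp²_t(x)) minimizes the mixed quadratic flow-matching loss over all measurable vector fields: for every measurable w : ℝ^d → ℝ^d, (1−γ)∫‖v_t(x)−v¹_t(x)‖² p¹_t(x)dx + γ∫‖v_t(x)−v²_t(x)‖² p²_t(x)dx ≤ (1−γ)∫‖w(x)−v¹_t(x)‖² p¹_t(x)dx + γ∫‖w(x)−v²_t(x)‖² p²_t(x)dx. -/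
/-!
Pointwise, with `a = (1-γ) p¹_t(x)` and `b = γ p²_t(x)`, the barycenter `u = (a+b)⁻¹ (a v¹ + b v²)`
satisfies the parallel-axis identity `a‖z-v¹‖² + b‖z-v²‖² = a‖u-v¹‖² + b‖u-v²‖² + (a+b)‖z-u‖²`,
so it minimizes the integrand of the loss at every `x`; integrating gives the claim.
-/

open MeasureTheory
open scoped ENNReal RealInnerProductSpace

section Barycenter

variable {E : Type*} [NormedAddCommGroup E] [InnerProductSpace ℝ E]

theorem weighted_norm_sub_sq_eq_of_smul_eq {a b : ℝ} {x y u : E}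
    (hu : (a + b) • u = a • x + b • y) (z : E) :
    a * ‖z - x‖ ^ 2 + b * ‖z - y‖ ^ 2
      = a * ‖u - x‖ ^ 2 + b * ‖u - y‖ ^ 2 + (a + b) * ‖z - u‖ ^ 2 := by
  have hcross : a * ⟪z - u, u - x⟫ + b * ⟪z - u, u - y⟫ = 0 := by
    have hsum : a • (u - x) + b • (u - y) = 0 := by
      linear_combination (norm := module) hu
    rw [← real_inner_smul_right, ← real_inner_smul_right, ← inner_add_right, hsum, inner_zero_right]
  rw [show z - x = (z - u) + (u - x) by abel, show z - y = (z - u) + (u - y) by abel,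
    norm_add_sq_real, norm_add_sq_real]
  linear_combination 2 * hcross

theorem weighted_norm_sub_sq_le_of_smul_eq {a b : ℝ} {x y u : E} (hab : 0 ≤ a + b)
    (hu : (a + b) • u = a • x + b • y) (z : E) :
    a * ‖u - x‖ ^ 2 + b * ‖u - y‖ ^ 2 ≤ a * ‖z - x‖ ^ 2 + b * ‖z - y‖ ^ 2 := by
  rw [weighted_norm_sub_sq_eq_of_smul_eq hu z]
  exact le_add_of_nonneg_right (mul_nonneg hab (sq_nonneg _))

end Barycenter

theorem ofReal_mul_nnnorm_sq_mul_ofReal {E : Type*} [SeminormedAddCommGroup E] {c : ℝ}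
    (hc : 0 ≤ c) (z : E) (p : ℝ) :
    ENNReal.ofReal c * ((‖z‖₊ : ℝ≥0∞) ^ 2 * ENNReal.ofReal p)
      = ENNReal.ofReal (c * p * ‖z‖ ^ 2) := by
  rw [mul_assoc, mul_comm p, ENNReal.ofReal_mul hc, ENNReal.ofReal_mul (sq_nonneg _),
    ENNReal.ofReal_pow (norm_nonneg _), ofReal_norm, enorm_eq_nnnorm]

theorem weighted_nnnorm_sub_sq_le_of_smul_eq {E : Type*} [NormedAddCommGroup E]
    [InnerProductSpace ℝ E] {c₁ c₂ p₁ p₂ : ℝ} (hc₁ : 0 ≤ c₁) (hc₂ : 0 ≤ c₂)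
    (hp₁ : 0 ≤ p₁) (hp₂ : 0 ≤ p₂) {x y u : E}
    (hu : (c₁ * p₁ + c₂ * p₂) • u = (c₁ * p₁) • x + (c₂ * p₂) • y) (z : E) :
    ENNReal.ofReal c₁ * ((‖u - x‖₊ : ℝ≥0∞) ^ 2 * ENNReal.ofReal p₁)
        + ENNReal.ofReal c₂ * ((‖u - y‖₊ : ℝ≥0∞) ^ 2 * ENNReal.ofReal p₂)
      ≤ ENNReal.ofReal c₁ * ((‖z - x‖₊ : ℝ≥0∞) ^ 2 * ENNReal.ofReal p₁)
        + ENNReal.ofReal c₂ * ((‖z - y‖₊ : ℝ≥0∞) ^ 2 * ENNReal.ofReal p₂) := by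
  simp only [ofReal_mul_nnnorm_sq_mul_ofReal hc₁, ofReal_mul_nnnorm_sq_mul_ofReal hc₂]
  rw [← ENNReal.ofReal_add (by positivity) (by positivity),
    ← ENNReal.ofReal_add (by positivity) (by positivity)]
  exact ENNReal.ofReal_le_ofReal
    (weighted_norm_sub_sq_le_of_smul_eq (by positivity) hu z)

theorem MeasureTheory.mul_lintegral_add_mul_lintegral_le {α : Type*} [MeasurableSpace α]
    {μ : Measure α} {a b : ℝ≥0∞} (hb : b ≠ ∞) {f₁ f₂ g₁ g₂ : α → ℝ≥0∞}
    (hg₁ : Measurable g₁) (h : ∀ᵐ x ∂μ, a * f₁ x + b * f₂ x ≤ a * g₁ x + b * g₂ x) :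
    a * ∫⁻ x, f₁ x ∂μ + b * ∫⁻ x, f₂ x ∂μ ≤ a * ∫⁻ x, g₁ x ∂μ + b * ∫⁻ x, g₂ x ∂μ :=
  calc a * ∫⁻ x, f₁ x ∂μ + b * ∫⁻ x, f₂ x ∂μ
      ≤ ∫⁻ x, a * f₁ x ∂μ + ∫⁻ x, b * f₂ x ∂μ :=
        add_le_add (lintegral_const_mul_le a f₁) (lintegral_const_mul_le b f₂)
    _ ≤ ∫⁻ x, (a * f₁ x + b * f₂ x) ∂μ := le_lintegral_add _ _
    _ ≤ ∫⁻ x, (a * g₁ x + b * g₂ x) ∂μ := lintegral_mono_ae h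
    _ = a * ∫⁻ x, g₁ x ∂μ + b * ∫⁻ x, g₂ x ∂μ := by
        rw [lintegral_add_left (hg₁.const_mul a), lintegral_const_mul a hg₁,
          lintegral_const_mul' b _ hb]

theorem mixture_vector_field_minimizes_mixed_flow_matching_loss_general {d : ℕ}
    (γ : ℝ) (hγ0 : 0 ≤ γ) (hγ1 : γ ≤ 1)
    (p1 p2 : EuclideanSpace ℝ (Fin d) → ℝ)
    (v1 v2 : EuclideanSpace ℝ (Fin d) → EuclideanSpace ℝ (Fin d))
    (hp1meas : Measurable p1)
    (hv1meas : Measurable v1)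
    (hp1nn : ∀ x, 0 ≤ p1 x) (hp2nn : ∀ x, 0 ≤ p2 x)
    (hpos : ∀ x, 0 < (1 - γ) * p1 x + γ * p2 x)
    (v : EuclideanSpace ℝ (Fin d) → EuclideanSpace ℝ (Fin d))
    (hv : ∀ x, v x = ((1 - γ) * p1 x + γ * p2 x)⁻¹ •
        (((1 - γ) * p1 x) • v1 x + (γ * p2 x) • v2 x)) :
    ∀ w : EuclideanSpace ℝ (Fin d) → EuclideanSpace ℝ (Fin d), Measurable w →
      ENNReal.ofReal (1 - γ) *
          (∫⁻ x, (‖v x - v1 x‖₊ : ℝ≥0∞) ^ (2 : ℕ) * ENNReal.ofReal (p1 x))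
        + ENNReal.ofReal γ *
          (∫⁻ x, (‖v x - v2 x‖₊ : ℝ≥0∞) ^ (2 : ℕ) * ENNReal.ofReal (p2 x))
      ≤ ENNReal.ofReal (1 - γ) *
          (∫⁻ x, (‖w x - v1 x‖₊ : ℝ≥0∞) ^ (2 : ℕ) * ENNReal.ofReal (p1 x))
        + ENNReal.ofReal γ *
          (∫⁻ x, (‖w x - v2 x‖₊ : ℝ≥0∞) ^ (2 : ℕ) * ENNReal.ofReal (p2 x)) := by
  intro w hw
  have hbarycenter : ∀ x, ((1 - γ) * p1 x + γ * p2 x) • v x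
      = ((1 - γ) * p1 x) • v1 x + (γ * p2 x) • v2 x := fun x => by
    rw [hv x, smul_inv_smul₀ (hpos x).ne']
  refine mul_lintegral_add_mul_lintegral_le ENNReal.ofReal_ne_top (by fun_prop)
    (ae_of_all _ fun x => ?_)
  exact weighted_nnnorm_sub_sq_le_of_smul_eq (sub_nonneg.2 hγ1) hγ0 (hp1nn x) (hp2nn x)
    (hbarycenter x) (w x)

/-- The density-weighted mixture vector field minimizes the mixed
quadratic flow-matching loss over all measurable vector fields. -/
theorem mixture_vector_field_minimizes_mixed_flow_matching_loss {d : ℕ}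
    (γ : ℝ) (hγ0 : 0 ≤ γ) (hγ1 : γ ≤ 1)
    (p1 p2 : EuclideanSpace ℝ (Fin d) → ℝ)
    (v1 v2 : EuclideanSpace ℝ (Fin d) → EuclideanSpace ℝ (Fin d))
    (hp1meas : Measurable p1) (hp2meas : Measurable p2)
    (hv1meas : Measurable v1) (hv2meas : Measurable v2)
    (hp1nn : ∀ x, 0 ≤ p1 x) (hp2nn : ∀ x, 0 ≤ p2 x)
    (hp1int : (∫ x, p1 x) = 1) (hp2int : (∫ x, p2 x) = 1)
    (hpos : ∀ x, 0 < (1 - γ) * p1 x + γ * p2 x)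
    (hv1L2 : (∫⁻ x, (‖v1 x‖₊ : ℝ≥0∞) ^ (2 : ℕ) * ENNReal.ofReal (p1 x)) < ⊤)
    (hv2L2 : (∫⁻ x, (‖v2 x‖₊ : ℝ≥0∞) ^ (2 : ℕ) * ENNReal.ofReal (p2 x)) < ⊤)
    (v : EuclideanSpace ℝ (Fin d) → EuclideanSpace ℝ (Fin d))
    (hv : ∀ x, v x = ((1 - γ) * p1 x + γ * p2 x)⁻¹ •
        (((1 - γ) * p1 x) • v1 x + (γ * p2 x) • v2 x)) :
    ∀ w : EuclideanSpace ℝ (Fin d) → EuclideanSpace ℝ (Fin d), Measurable w →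
      ENNReal.ofReal (1 - γ) *
          (∫⁻ x, (‖v x - v1 x‖₊ : ℝ≥0∞) ^ (2 : ℕ) * ENNReal.ofReal (p1 x))
        + ENNReal.ofReal γ *
          (∫⁻ x, (‖v x - v2 x‖₊ : ℝ≥0∞) ^ (2 : ℕ) * ENNReal.ofReal (p2 x))
      ≤ ENNReal.ofReal (1 - γ) *
          (∫⁻ x, (‖w x - v1 x‖₊ : ℝ≥0∞) ^ (2 : ℕ) * ENNReal.ofReal (p1 x))
        + ENNReal.ofReal γ *
          (∫⁻ x, (‖w x - v2 x‖₊ : ℝ≥0∞) ^ (2 : ℕ) * ENNReal.ofReal (p2 x)) :=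
  mixture_vector_field_minimizes_mixed_flow_matching_loss_general γ hγ0 hγ1 p1 p2 v1 v2 hp1meas
    hv1meas hp1nn hp2nn hpos v hv
end
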